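/- arXiv:1801.10243 — 2 statements merged into one kernel-verified Lean document; each statement's English description precedes it below -/
import Mathlib

section
/- Suppose Xᵀ(D+Γ)X and XᵀDX are positive definite, with Γ = diag(γ). Let ω̄_max be the largest singular value of XXᵀ, ν_min the smallest singular value of Xᵀ(D+Γ)X, and A = XᵀDX. Then for every vector z, |zᵀ(Xᵀ(D+Γ)X)⁻¹z - zᵀ(XᵀDX)⁻¹z| ≤ (‖γ‖₂ + (ω̄_max/ν_min)·‖γ‖₄²) · ‖XA⁻¹z‖₄². -/
open Matrix Finset

/-!
Write `A = XᵀDX`, `B = Xᵀ(D+Γ)X = A + XᵀΓX`. The second-order resolvent identity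
`B⁻¹ - A⁻¹ = -A⁻¹(B-A)A⁻¹ + A⁻¹(B-A)B⁻¹(B-A)A⁻¹` turns the difference of quadratic forms into
`-uᵀΓu + wᵀB⁻¹w` with `u = XA⁻¹z` and `w = XᵀΓu`. Cauchy–Schwarz bounds the first term by
`‖γ‖₂‖u‖₄²`. For the second, the singular value bound gives `‖B⁻¹w‖ ≤ ‖w‖/ν_min`, hence
`|wᵀB⁻¹w| ≤ ‖w‖²/ν_min`, and `‖w‖² ≤ ω̄_max‖Γu‖² ≤ ω̄_max‖γ‖₄²‖u‖₄²`, again by Cauchy–Schwarz.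
-/

theorem Real.abs_sum_mul_le_sqrt_mul_sqrt {ι : Type*} (s : Finset ι) (f g : ι → ℝ) :
    |∑ i ∈ s, f i * g i| ≤ √(∑ i ∈ s, f i ^ 2) * √(∑ i ∈ s, g i ^ 2) := by
  rw [← Real.sqrt_mul (sum_nonneg fun i _ => sq_nonneg (f i)), ← Real.sqrt_sq_eq_abs]
  exact Real.sqrt_le_sqrt (sum_mul_sq_le_sq_mul_sq s f g)

namespace Matrix

variable {m n : Type*} [Fintype m] [Fintype n]

theorem inv_sub_inv_second_order [DecidableEq n] {K : Type*} [CommRing K]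
    {A B : Matrix n n K} (hA : IsUnit A.det) (hB : IsUnit B.det) :
    B⁻¹ - A⁻¹ = -(A⁻¹ * (B - A) * A⁻¹) + A⁻¹ * (B - A) * B⁻¹ * (B - A) * A⁻¹ := by
  have hAB : A⁻¹ * (B - A) * B⁻¹ = A⁻¹ - B⁻¹ := by
    rw [Matrix.mul_sub, Matrix.sub_mul, mul_nonsing_inv_cancel_right B _ hB,
      nonsing_inv_mul A hA, Matrix.one_mul]
  have hBA : B⁻¹ * (B - A) * A⁻¹ = A⁻¹ - B⁻¹ := by
    rw [Matrix.mul_sub, Matrix.sub_mul, nonsing_inv_mul B hB, Matrix.one_mul,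
      mul_nonsing_inv_cancel_right A _ hA]
  have hsecond : A⁻¹ * (B - A) * B⁻¹ * (B - A) * A⁻¹ = A⁻¹ * (B - A) * A⁻¹ - (A⁻¹ - B⁻¹) :=
    calc _ = A⁻¹ * (B - A) * (B⁻¹ * (B - A) * A⁻¹) := by simp only [Matrix.mul_assoc]
      _ = _ := by rw [hBA, Matrix.mul_sub, hAB]
  rw [hsecond]
  abel

theorem abs_dotProduct_le_sqrt_mul_sqrt (v w : n → ℝ) :
    |v ⬝ᵥ w| ≤ √(v ⬝ᵥ v) * √(w ⬝ᵥ w) := by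
  simpa only [dotProduct, sq] using Real.abs_sum_mul_le_sqrt_mul_sqrt univ v w

theorem dotProduct_mulVec_transpose_mul_mul {α : Type*} [CommSemiring α] (M : Matrix m n α)
    (N : Matrix m m α) (z : n → α) :
    z ⬝ᵥ (Mᵀ * N * M) *ᵥ z = M *ᵥ z ⬝ᵥ N *ᵥ (M *ᵥ z) := by
  rw [← mulVec_mulVec, ← mulVec_mulVec, dotProduct_mulVec, vecMul_transpose]

theorem dotProduct_mulVec_mul_transpose {α : Type*} [CommSemiring α] (X : Matrix m n α)
    (v : m → α) : v ⬝ᵥ (X * Xᵀ) *ᵥ v = Xᵀ *ᵥ v ⬝ᵥ Xᵀ *ᵥ v := by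
  rw [← mulVec_mulVec, dotProduct_mulVec, mulVec_transpose]

theorem dotProduct_inv_add_mulVec_sub [DecidableEq n] {A : Matrix n n ℝ} {Γ : Matrix m m ℝ}
    (X : Matrix m n ℝ) (hA : Aᵀ = A) (hΓ : Γᵀ = Γ) (hAu : IsUnit A.det)
    (hBu : IsUnit (A + Xᵀ * Γ * X).det) (z : n → ℝ) (u : m → ℝ) (hu : u = (X * A⁻¹) *ᵥ z) :
    z ⬝ᵥ (A + Xᵀ * Γ * X)⁻¹ *ᵥ z - z ⬝ᵥ A⁻¹ *ᵥ z =
      -(u ⬝ᵥ Γ *ᵥ u) + Xᵀ *ᵥ (Γ *ᵥ u) ⬝ᵥ (A + Xᵀ * Γ * X)⁻¹ *ᵥ (Xᵀ *ᵥ (Γ *ᵥ u)) := by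
  set B := A + Xᵀ * Γ * X
  have hBA : B - A = Xᵀ * Γ * X := add_sub_cancel_left A _
  have hAinv : A⁻¹ᵀ = A⁻¹ := by rw [transpose_nonsing_inv, hA]
  have hfirst : A⁻¹ * (B - A) * A⁻¹ = (X * A⁻¹)ᵀ * Γ * (X * A⁻¹) := by
    rw [hBA, transpose_mul, hAinv]
    simp only [Matrix.mul_assoc]
  have hsecond : A⁻¹ * (B - A) * B⁻¹ * (B - A) * A⁻¹ =
      ((B - A) * A⁻¹)ᵀ * B⁻¹ * ((B - A) * A⁻¹) := by
    rw [transpose_mul, hAinv, hBA, transpose_mul, transpose_mul, transpose_transpose, hΓ]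
    simp only [Matrix.mul_assoc]
  have hw : ((B - A) * A⁻¹) *ᵥ z = Xᵀ *ᵥ (Γ *ᵥ u) := by
    rw [hu, hBA]
    simp only [Matrix.mul_assoc, mulVec_mulVec]
  rw [← dotProduct_sub, ← sub_mulVec, inv_sub_inv_second_order hAu hBu, add_mulVec,
    dotProduct_add, neg_mulVec, dotProduct_neg, hfirst, hsecond,
    dotProduct_mulVec_transpose_mul_mul, dotProduct_mulVec_transpose_mul_mul, hw, hu]

theorem abs_dotProduct_diagonal_mulVec_le [DecidableEq n] (γ u : n → ℝ) :
    |u ⬝ᵥ diagonal γ *ᵥ u| ≤ √(∑ i, γ i ^ 2) * √(∑ i, u i ^ 4) := by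
  have h := Real.abs_sum_mul_le_sqrt_mul_sqrt univ γ (fun i => u i ^ 2)
  simp only [← pow_mul] at h
  convert h using 2
  simp only [dotProduct, mulVec_diagonal]
  exact sum_congr rfl fun i _ => by ring

theorem abs_dotProduct_inv_mulVec_le [DecidableEq n] {B : Matrix n n ℝ} (hB : IsUnit B.det)
    {ν : ℝ} (hν : 0 < ν) (hBν : ∀ v, ν * √(v ⬝ᵥ v) ≤ √(B *ᵥ v ⬝ᵥ B *ᵥ v)) (w : n → ℝ) :
    |w ⬝ᵥ B⁻¹ *ᵥ w| ≤ (w ⬝ᵥ w) / ν := by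
  have hy : √(B⁻¹ *ᵥ w ⬝ᵥ B⁻¹ *ᵥ w) ≤ √(w ⬝ᵥ w) / ν := by
    rw [le_div_iff₀' hν]
    simpa only [mulVec_mulVec, mul_nonsing_inv _ hB, one_mulVec] using hBν (B⁻¹ *ᵥ w)
  calc |w ⬝ᵥ B⁻¹ *ᵥ w| ≤ √(w ⬝ᵥ w) * √(B⁻¹ *ᵥ w ⬝ᵥ B⁻¹ *ᵥ w) :=
        abs_dotProduct_le_sqrt_mul_sqrt _ _
    _ ≤ √(w ⬝ᵥ w) * (√(w ⬝ᵥ w) / ν) := by gcongr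
    _ = (w ⬝ᵥ w) / ν := by
        have hw : 0 ≤ w ⬝ᵥ w := Fintype.sum_nonneg fun i => mul_self_nonneg (w i)
        rw [← mul_div_assoc, Real.mul_self_sqrt hw]

theorem nonneg_of_forall_dotProduct_mul_transpose_mulVec_le [Nonempty m] (X : Matrix m n ℝ)
    {ω : ℝ} (hω : ∀ v, v ⬝ᵥ (X * Xᵀ) *ᵥ v ≤ ω * (v ⬝ᵥ v)) : 0 ≤ ω := by
  classical
  obtain ⟨i⟩ := ‹Nonempty m›
  have h := hω (Pi.single i 1)
  rw [dotProduct_mulVec_mul_transpose, single_dotProduct, Pi.single_eq_same, mul_one,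
    mul_one] at h
  exact (Fintype.sum_nonneg fun j => mul_self_nonneg _).trans h

theorem dotProduct_self_transpose_mulVec_diagonal_mulVec_le [DecidableEq m] (X : Matrix m n ℝ)
    {ω : ℝ} (hω : ∀ v, v ⬝ᵥ (X * Xᵀ) *ᵥ v ≤ ω * (v ⬝ᵥ v)) (γ u : m → ℝ) :
    Xᵀ *ᵥ (diagonal γ *ᵥ u) ⬝ᵥ Xᵀ *ᵥ (diagonal γ *ᵥ u) ≤
      ω * (√(∑ i, γ i ^ 4) * √(∑ i, u i ^ 4)) := by
  cases isEmpty_or_nonempty m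
  · simp [mulVec, dotProduct]
  have hω₀ := nonneg_of_forall_dotProduct_mul_transpose_mulVec_le X hω
  have hγu : diagonal γ *ᵥ u ⬝ᵥ diagonal γ *ᵥ u ≤ √(∑ i, γ i ^ 4) * √(∑ i, u i ^ 4) := by
    have h := Real.abs_sum_mul_le_sqrt_mul_sqrt univ (fun i => γ i ^ 2) (fun i => u i ^ 2)
    simp only [← pow_mul] at h
    refine le_trans (le_of_eq ?_) ((le_abs_self _).trans h)
    simp only [dotProduct, mulVec_diagonal]
    exact sum_congr rfl fun i _ => by ring
  rw [← dotProduct_mulVec_mul_transpose]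
  exact (hω _).trans (mul_le_mul_of_nonneg_left hγu hω₀)

end Matrix

/-- Quadratic-form perturbation bound (Lemma 9 of the paper).  If `Xᵀ(D+Γ)X` and `XᵀDX`
are positive definite with `Γ = diag(γ)`, `ω̄max` an upper bound for the largest singular
value of `XXᵀ` and `νmin` a lower bound for the smallest singular value of `Xᵀ(D+Γ)X`,
then for every `z`,
`|zᵀ(Xᵀ(D+Γ)X)⁻¹z - zᵀ(XᵀDX)⁻¹z| ≤ (‖γ‖₂ + (ω̄max/νmin)‖γ‖₄²)·‖XA⁻¹z‖₄²`. -/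
theorem quadratic_form_inverse_perturbation (m p : ℕ)
    (X : Matrix (Fin m) (Fin p) ℝ) (d γ : Fin m → ℝ)
    (D : Matrix (Fin m) (Fin m) ℝ) (hD : D = Matrix.diagonal d)
    (Γ : Matrix (Fin m) (Fin m) ℝ) (hΓ : Γ = Matrix.diagonal γ)
    (hPD1 : (Xᵀ * (D + Γ) * X).PosDef) (hPD2 : (Xᵀ * D * X).PosDef)
    (ωmax νmin : ℝ) (hν : 0 < νmin)
    (hω : ∀ v : Fin m → ℝ, v ⬝ᵥ (X * Xᵀ).mulVec v ≤ ωmax * (v ⬝ᵥ v))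
    (hνmin : ∀ v : Fin p → ℝ, νmin * Real.sqrt (v ⬝ᵥ v)
      ≤ Real.sqrt ((Xᵀ * (D + Γ) * X).mulVec v ⬝ᵥ (Xᵀ * (D + Γ) * X).mulVec v))
    (A : Matrix (Fin p) (Fin p) ℝ) (hA : A = Xᵀ * D * X) (z : Fin p → ℝ) :
    |z ⬝ᵥ (Xᵀ * (D + Γ) * X)⁻¹.mulVec z - z ⬝ᵥ (Xᵀ * D * X)⁻¹.mulVec z| ≤
      (Real.sqrt (∑ i, γ i ^ 2) + (ωmax / νmin) * Real.sqrt (∑ i, γ i ^ 4)) *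
        Real.sqrt (∑ j, ((X * A⁻¹).mulVec z j) ^ 4) := by
  subst hA hD hΓ
  have hBu := (isUnit_iff_isUnit_det _).mp hPD1.isUnit
  have hAu := (isUnit_iff_isUnit_det _).mp hPD2.isUnit
  have hsplit : Xᵀ * (diagonal d + diagonal γ) * X = Xᵀ * diagonal d * X + Xᵀ * diagonal γ * X := by
    rw [Matrix.mul_add, Matrix.add_mul]
  rw [hsplit] at hBu hνmin ⊢
  set u := (X * (Xᵀ * diagonal d * X)⁻¹) *ᵥ z
  have hAsymm : (Xᵀ * diagonal d * X)ᵀ = Xᵀ * diagonal d * X := by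
    simp only [transpose_mul, diagonal_transpose, transpose_transpose, Matrix.mul_assoc]
  rw [dotProduct_inv_add_mulVec_sub X hAsymm (diagonal_transpose γ) hAu hBu z u rfl]
  have hfirst := abs_dotProduct_diagonal_mulVec_le γ u
  have hsecond := abs_dotProduct_inv_mulVec_le hBu hν hνmin (Xᵀ *ᵥ (diagonal γ *ᵥ u))
  have hw := dotProduct_self_transpose_mulVec_diagonal_mulVec_le X hω γ u
  calc _ ≤ |u ⬝ᵥ diagonal γ *ᵥ u| + |Xᵀ *ᵥ (diagonal γ *ᵥ u) ⬝ᵥ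
          (Xᵀ * diagonal d * X + Xᵀ * diagonal γ * X)⁻¹ *ᵥ (Xᵀ *ᵥ (diagonal γ *ᵥ u))| :=
        (abs_add_le _ _).trans_eq (by rw [abs_neg])
    _ ≤ √(∑ i, γ i ^ 2) * √(∑ i, u i ^ 4) + ωmax * (√(∑ i, γ i ^ 4) * √(∑ i, u i ^ 4)) / νmin :=
        add_le_add hfirst (hsecond.trans (div_le_div_of_nonneg_right hw hν.le))
    _ = _ := by ring
end

section
/- Let ℓ(y|z) be twice differentiable convex in z, r twice differentiable with Hessian of λr bounded below by 2λγ > 0 (e.g. r(β) = γ‖β‖² plus a convex smooth term). Let β̂ minimize Σⱼ ℓ(yⱼ|xⱼᵀβ) + λr(β) and β̂_{/i} minimize the same objective with the i-th term omitted. If the smallest eigenvalue of XᵀX + λ·diag(r''(β)) is at least 2λγ for all β (where ℓ is the squared loss ℓ(y|z) = (y-z)²/2), then ‖β̂_{/i} - β̂‖₂ ≤ |y_i - x_iᵀβ̂_{/i}|·‖x_i‖₂/(2λγ). -/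
open Matrix Finset

/-! Write `d = β̂_{/i} - β̂`. Both minimizers are stationary along the direction `d`; subtracting
the two first-order conditions gives
`‖X d‖² + λ ⟪r'(β̂_{/i}) - r'(β̂), d⟫ = (x_iᵀβ̂_{/i} - y_i) x_iᵀd`.
Since `r'' ≥ 2γ`, the map `r'` is strongly monotone, so the left side is at least `2λγ ‖d‖²`,
while Cauchy–Schwarz bounds the right side by `|y_i - x_iᵀβ̂_{/i}| ‖x_i‖ ‖d‖`. -/

lemma mul_sub_sq_le_sub_mul_sub_of_hasDerivAt {f f' : ℝ → ℝ} {m : ℝ}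
    (hf : ∀ z, HasDerivAt f (f' z) z) (hm : ∀ z, m ≤ f' z) (a b : ℝ) :
    m * (a - b) ^ 2 ≤ (f a - f b) * (a - b) := by
  have hmono : Monotone fun z => f z - m * z :=
    monotone_of_hasDerivAt_nonneg (fun z => (hf z).sub ((hasDerivAt_id z).const_mul m))
      fun z => by simpa using hm z
  rcases le_total b a with h | h
  · nlinarith [hmono h]
  · nlinarith [hmono h]

lemma mul_sum_mul_le_abs_mul_sqrt_mul_sqrt {ι : Type*} (s : Finset ι) (c : ℝ) (f g : ι → ℝ) :
    c * ∑ k ∈ s, f k * g k ≤ |c| * √(∑ k ∈ s, f k ^ 2) * √(∑ k ∈ s, g k ^ 2) := by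
  have hsq : ∑ k ∈ s, (c * f k) ^ 2 = c ^ 2 * ∑ k ∈ s, f k ^ 2 := by
    rw [mul_sum]; exact sum_congr rfl fun k _ => by ring
  calc c * ∑ k ∈ s, f k * g k = ∑ k ∈ s, (c * f k) * g k := by
        rw [mul_sum]; exact sum_congr rfl fun k _ => by ring
    _ ≤ √(∑ k ∈ s, (c * f k) ^ 2) * √(∑ k ∈ s, g k ^ 2) := Real.sum_mul_le_sqrt_mul_sqrt _ _ _
    _ = |c| * √(∑ k ∈ s, f k ^ 2) * √(∑ k ∈ s, g k ^ 2) := by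
        rw [hsq, Real.sqrt_mul (sq_nonneg c), Real.sqrt_sq_eq_abs]

lemma le_div_of_mul_sq_le_mul {a c s : ℝ} (ha : 0 ≤ a) (hc : 0 < c) (hs : 0 ≤ s)
    (h : c * s ^ 2 ≤ a * s) : s ≤ a / c := by
  rw [le_div_iff₀ hc]
  rcases hs.eq_or_lt with rfl | hs
  · simpa using ha
  · nlinarith

section RegularizedLeastSquares

variable {ι κ : Type*} [Fintype κ] (X : Matrix ι κ ℝ) (y : ι → ℝ) (r : ℝ → ℝ) (lam : ℝ)

noncomputable def regLeastSquares (s : Finset ι) (β : κ → ℝ) : ℝ :=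
  (∑ j ∈ s, (y j - (X *ᵥ β) j) ^ 2 / 2) + lam * ∑ k, r (β k)

variable {X y r lam}

lemma hasDerivAt_regLeastSquares_line {r' : ℝ → ℝ} (hr' : ∀ z, HasDerivAt r (r' z) z)
    (s : Finset ι) (β v : κ → ℝ) :
    HasDerivAt (fun t : ℝ => regLeastSquares X y r lam s (β + t • v))
      ((∑ j ∈ s, ((X *ᵥ β) j - y j) * (X *ᵥ v) j) + lam * ∑ k, r' (β k) * v k) 0 := by
  unfold regLeastSquares
  simp only [mulVec_add, mulVec_smul, Pi.add_apply, Pi.smul_apply, smul_eq_mul]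
  refine (HasDerivAt.fun_sum fun j _ => ?_).add ((HasDerivAt.fun_sum fun k _ => ?_).const_mul lam)
  · have hres : HasDerivAt (fun t => y j - ((X *ᵥ β) j + t * (X *ᵥ v) j)) (-(X *ᵥ v) j) 0 := by
      simpa using ((hasDerivAt_mul_const ((X *ᵥ v) j)).const_add ((X *ᵥ β) j)).const_sub (y j)
    refine ((hres.fun_pow 2).div_const 2).congr_deriv ?_
    push_cast
    ring
  · have hcomp := (hr' (β k + 0 * v k)).comp 0 ((hasDerivAt_mul_const (v k)).const_add (β k))
    simpa [Function.comp_def] using hcomp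

lemma regLeastSquares_stationary {r' : ℝ → ℝ} (hr' : ∀ z, HasDerivAt r (r' z) z)
    {s : Finset ι} {β : κ → ℝ}
    (hmin : ∀ β', regLeastSquares X y r lam s β ≤ regLeastSquares X y r lam s β') (v : κ → ℝ) :
    (∑ j ∈ s, ((X *ᵥ β) j - y j) * (X *ᵥ v) j) + lam * ∑ k, r' (β k) * v k = 0 :=
  IsLocalMin.hasDerivAt_eq_zero (Filter.Eventually.of_forall fun t => by simpa using hmin _)
    (hasDerivAt_regLeastSquares_line hr' s β v)

lemma regLeastSquares_leaveOneOut_eq [Fintype ι] [DecidableEq ι] {r' : ℝ → ℝ}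
    (hr' : ∀ z, HasDerivAt r (r' z) z) (i : ι) {βhat βloo : κ → ℝ}
    (hhat : ∀ β, regLeastSquares X y r lam univ βhat ≤ regLeastSquares X y r lam univ β)
    (hloo : ∀ β, regLeastSquares X y r lam (univ.erase i) βloo ≤
      regLeastSquares X y r lam (univ.erase i) β) :
    (∑ j, (X *ᵥ (βloo - βhat)) j ^ 2) +
        lam * ∑ k, (r' (βloo k) - r' (βhat k)) * (βloo k - βhat k) =
      ((X *ᵥ βloo) i - y i) * (X *ᵥ (βloo - βhat)) i := by
  set d := βloo - βhat
  have hstat_hat := regLeastSquares_stationary hr' hhat d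
  have hstat_loo := regLeastSquares_stationary hr' hloo d
  rw [sum_erase_eq_sub (mem_univ i)] at hstat_loo
  have hquad : ∑ j, (X *ᵥ d) j ^ 2 =
      ∑ j, ((X *ᵥ βloo) j - y j) * (X *ᵥ d) j - ∑ j, ((X *ᵥ βhat) j - y j) * (X *ᵥ d) j := by
    rw [← sum_sub_distrib]
    refine sum_congr rfl fun j _ => ?_
    rw [show (X *ᵥ d) j = (X *ᵥ βloo) j - (X *ᵥ βhat) j by simp [d, mulVec_sub]]
    ring
  have hreg : ∑ k, (r' (βloo k) - r' (βhat k)) * (βloo k - βhat k) =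
      ∑ k, r' (βloo k) * d k - ∑ k, r' (βhat k) * d k := by
    rw [← sum_sub_distrib]
    exact sum_congr rfl fun k _ => by simp only [d, Pi.sub_apply]; ring
  rw [hquad, hreg]
  linarith

end RegularizedLeastSquares

theorem leave_one_out_perturbation_bound_general (n p : ℕ) (i : Fin n)
    (X : Matrix (Fin n) (Fin p) ℝ) (y : Fin n → ℝ)
    (r r' r'' : ℝ → ℝ)
    (hr' : ∀ z : ℝ, HasDerivAt r (r' z) z)
    (hr'' : ∀ z : ℝ, HasDerivAt r' (r'' z) z)
    (γ lam : ℝ) (hγ : 0 < γ) (hlam : 0 < lam)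
    (hconv : ∀ z : ℝ, 2 * γ ≤ r'' z)
    (βhat βloo : Fin p → ℝ)
    (hβhat : ∀ β : Fin p → ℝ,
      (∑ j, (y j - X.mulVec βhat j) ^ 2 / 2) + lam * ∑ k, r (βhat k) ≤
        (∑ j, (y j - X.mulVec β j) ^ 2 / 2) + lam * ∑ k, r (β k))
    (hβloo : ∀ β : Fin p → ℝ,
      (∑ j ∈ Finset.univ.erase i, (y j - X.mulVec βloo j) ^ 2 / 2) + lam * ∑ k, r (βloo k) ≤
        (∑ j ∈ Finset.univ.erase i, (y j - X.mulVec β j) ^ 2 / 2) + lam * ∑ k, r (β k)) :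
    Real.sqrt (∑ k, (βloo k - βhat k) ^ 2) ≤
      |y i - X.mulVec βloo i| * Real.sqrt (∑ k, X i k ^ 2) / (2 * lam * γ) := by
  set S := ∑ k, (βloo k - βhat k) ^ 2
  have hidentity := regLeastSquares_leaveOneOut_eq hr' i hβhat hβloo
  have hstrong : 2 * γ * S ≤ ∑ k, (r' (βloo k) - r' (βhat k)) * (βloo k - βhat k) := by
    rw [mul_sum]
    exact sum_le_sum fun k _ => mul_sub_sq_le_sub_mul_sub_of_hasDerivAt hr'' hconv _ _
  have hcs : (X.mulVec βloo i - y i) * (X *ᵥ (βloo - βhat)) i ≤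
      |y i - X.mulVec βloo i| * √(∑ k, X i k ^ 2) * √S := by
    rw [abs_sub_comm]
    exact mul_sum_mul_le_abs_mul_sqrt_mul_sqrt univ _ (X i) (βloo - βhat)
  refine le_div_of_mul_sq_le_mul (by positivity) (by positivity) (Real.sqrt_nonneg _) ?_
  rw [Real.sq_sqrt (sum_nonneg fun k _ => sq_nonneg _)]
  calc 2 * lam * γ * S = lam * (2 * γ * S) := by ring
    _ ≤ lam * ∑ k, (r' (βloo k) - r' (βhat k)) * (βloo k - βhat k) := by gcongr
    _ ≤ (X.mulVec βloo i - y i) * (X *ᵥ (βloo - βhat)) i := by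
        linarith [hidentity, sum_nonneg fun j (_ : j ∈ univ) => sq_nonneg ((X *ᵥ (βloo - βhat)) j)]
    _ ≤ _ := hcs

/-- Leave-one-out perturbation bound for ridge-type (strongly convex) regularized least
squares: if `β̂` minimizes `Σⱼ (yⱼ - xⱼᵀβ)²/2 + λ Σₖ r(βₖ)` and `β̂_{/i}` minimizes the
objective with the `i`-th term omitted, where `r` is twice differentiable with
`r'' ≥ 2γ > 0` and the smallest eigenvalue of `XᵀX + λ diag(r''(β))` is at least `2λγ`
for every `β`, then `‖β̂_{/i} - β̂‖₂ ≤ |y_i - x_iᵀβ̂_{/i}| ‖x_i‖₂ / (2λγ)`. -/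
theorem leave_one_out_perturbation_bound (n p : ℕ) (i : Fin n)
    (X : Matrix (Fin n) (Fin p) ℝ) (y : Fin n → ℝ)
    (r r' r'' : ℝ → ℝ)
    (hr' : ∀ z : ℝ, HasDerivAt r (r' z) z)
    (hr'' : ∀ z : ℝ, HasDerivAt r' (r'' z) z)
    (γ lam : ℝ) (hγ : 0 < γ) (hlam : 0 < lam)
    (hconv : ∀ z : ℝ, 2 * γ ≤ r'' z)
    (heig : ∀ β v : Fin p → ℝ,
      2 * lam * γ * (v ⬝ᵥ v) ≤ v ⬝ᵥ (Xᵀ * X).mulVec v + lam * ∑ k, r'' (β k) * v k ^ 2)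
    (βhat βloo : Fin p → ℝ)
    (hβhat : ∀ β : Fin p → ℝ,
      (∑ j, (y j - X.mulVec βhat j) ^ 2 / 2) + lam * ∑ k, r (βhat k) ≤
        (∑ j, (y j - X.mulVec β j) ^ 2 / 2) + lam * ∑ k, r (β k))
    (hβloo : ∀ β : Fin p → ℝ,
      (∑ j ∈ Finset.univ.erase i, (y j - X.mulVec βloo j) ^ 2 / 2) + lam * ∑ k, r (βloo k) ≤
        (∑ j ∈ Finset.univ.erase i, (y j - X.mulVec β j) ^ 2 / 2) + lam * ∑ k, r (β k)) :
    Real.sqrt (∑ k, (βloo k - βhat k) ^ 2) ≤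
      |y i - X.mulVec βloo i| * Real.sqrt (∑ k, X i k ^ 2) / (2 * lam * γ) :=
  leave_one_out_perturbation_bound_general n p i X y r r' r'' hr' hr'' γ lam hγ hlam hconv βhat βloo
    hβhat hβloo
end
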